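/- In the trust-region method, if additionally g ≠ 0, the minimizer p of the quadratic model m(p) = gᵀp + ½pᵀBp over the ball of radius R > 0 satisfies the Cauchy decrease bound: m(0) − m(p) ≥ ½‖g‖ · min(R, ‖g‖/‖B‖). -/

import Mathlib

open scoped RealInnerProductSpace

/-!
Move from `0` a distance `s = min R (‖g‖ / ‖B‖)` along `-g`. Bounding the curvature term by
`‖B‖ s²` shows that the model decreases by at least `s ‖g‖ - ½ ‖B‖ s²`, and the choice of `s`
guarantees `‖B‖ s ≤ ‖g‖`, so this is at least `½ ‖g‖ s`. The minimizer does at least as well.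
-/

section QuadraticModel

variable {E : Type*} [NormedAddCommGroup E] [InnerProductSpace ℝ E]

noncomputable def quadraticModel (g : E) (B : E →L[ℝ] E) (q : E) : ℝ :=
  ⟪g, q⟫ + (1 / 2) * ⟪B q, q⟫

@[simp]
lemma quadraticModel_zero (g : E) (B : E →L[ℝ] E) : quadraticModel g B 0 = 0 := by
  simp [quadraticModel]

lemma quadraticModel_le (g : E) (B : E →L[ℝ] E) (q : E) :
    quadraticModel g B q ≤ ⟪g, q⟫ + (1 / 2) * ‖B‖ * ‖q‖ ^ 2 := by
  have hcurv : ⟪B q, q⟫ ≤ ‖B‖ * ‖q‖ ^ 2 :=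
    calc ⟪B q, q⟫ ≤ ‖B q‖ * ‖q‖ := real_inner_le_norm _ _
      _ ≤ ‖B‖ * ‖q‖ * ‖q‖ := by gcongr; exact B.le_opNorm q
      _ = ‖B‖ * ‖q‖ ^ 2 := by ring
  unfold quadraticModel
  linarith

lemma exists_norm_le_quadraticModel_le (g : E) (B : E →L[ℝ] E) {s : ℝ} (hs : 0 ≤ s) :
    ∃ q : E, ‖q‖ ≤ s ∧ quadraticModel g B q ≤ -(s * ‖g‖) + (1 / 2) * ‖B‖ * s ^ 2 := by
  rcases eq_or_ne g 0 with rfl | hg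
  · refine ⟨0, by simpa using hs, ?_⟩
    rw [quadraticModel_zero, norm_zero, mul_zero, neg_zero, zero_add]
    positivity
  have hg' : ‖g‖ ≠ 0 := norm_ne_zero_iff.mpr hg
  set q := -(s / ‖g‖) • g
  have hq_norm : ‖q‖ = s := by
    rw [norm_smul, norm_neg, Real.norm_of_nonneg (by positivity), div_mul_cancel₀ s hg']
  have hq_inner : ⟪g, q⟫ = -(s * ‖g‖) := by
    rw [inner_smul_right, real_inner_self_eq_norm_sq]
    field_simp
  refine ⟨q, hq_norm.le, ?_⟩
  simpa [hq_norm, hq_inner] using quadraticModel_le g B q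

end QuadraticModel

lemma mul_min_div_le {b k : ℝ} (R : ℝ) (hb : 0 ≤ b) (hk : 0 ≤ k) : b * min R (k / b) ≤ k := by
  rcases hb.eq_or_lt with rfl | hb
  · simpa using hk
  · calc b * min R (k / b) ≤ b * (k / b) := by gcongr; exact min_le_right _ _
      _ = k := mul_div_cancel₀ k hb.ne'

theorem trust_region_cauchy_decrease_general
    {n : ℕ} (g : EuclideanSpace ℝ (Fin n))
    (B : EuclideanSpace ℝ (Fin n) →L[ℝ] EuclideanSpace ℝ (Fin n))
    (R : ℝ) (hR : 0 < R) (p : EuclideanSpace ℝ (Fin n))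
    (hmin : IsMinOn (fun q => ⟪g, q⟫ + (1 / 2) * ⟪B q, q⟫) {q | ‖q‖ ≤ R} p) :
    (1 / 2) * ‖g‖ * min R (‖g‖ / ‖B‖) ≤
      (⟪g, (0 : EuclideanSpace ℝ (Fin n))⟫ +
          (1 / 2) * ⟪B 0, (0 : EuclideanSpace ℝ (Fin n))⟫) -
        (⟪g, p⟫ + (1 / 2) * ⟪B p, p⟫) := by
  set s := min R (‖g‖ / ‖B‖)
  have hs : 0 ≤ s := le_min hR.le (by positivity)
  have hsB : ‖B‖ * s ≤ ‖g‖ := mul_min_div_le R (norm_nonneg B) (norm_nonneg g)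
  obtain ⟨q, hq_norm, hq_model⟩ := exists_norm_le_quadraticModel_le g B hs
  have hpq : quadraticModel g B p ≤ quadraticModel g B q :=
    isMinOn_iff.mp hmin q (hq_norm.trans (min_le_left _ _))
  change (1 / 2) * ‖g‖ * s ≤ quadraticModel g B 0 - quadraticModel g B p
  rw [quadraticModel_zero]
  nlinarith [mul_le_mul_of_nonneg_left hsB hs]

/-- Cauchy decrease bound: if `g ≠ 0`, `B` is symmetric with `‖B‖ > 0`, and `p`
is a global minimizer of `m(q) = ⟪g, q⟫ + ½⟪B q, q⟫` over the ball of radius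
`R > 0`, then `m(0) − m(p) ≥ ½‖g‖ min(R, ‖g‖/‖B‖)`. -/
theorem trust_region_cauchy_decrease
    {n : ℕ} (g : EuclideanSpace ℝ (Fin n)) (hg : g ≠ 0)
    (B : EuclideanSpace ℝ (Fin n) →L[ℝ] EuclideanSpace ℝ (Fin n))
    (hBsymm : ∀ u v, ⟪B u, v⟫ = ⟪u, B v⟫) (hB : 0 < ‖B‖)
    (R : ℝ) (hR : 0 < R) (p : EuclideanSpace ℝ (Fin n)) (hp : ‖p‖ ≤ R)
    (hmin : IsMinOn (fun q => ⟪g, q⟫ + (1 / 2) * ⟪B q, q⟫) {q | ‖q‖ ≤ R} p) :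
    (1 / 2) * ‖g‖ * min R (‖g‖ / ‖B‖) ≤
      (⟪g, (0 : EuclideanSpace ℝ (Fin n))⟫ +
          (1 / 2) * ⟪B 0, (0 : EuclideanSpace ℝ (Fin n))⟫) -
        (⟪g, p⟫ + (1 / 2) * ⟪B p, p⟫) :=
  trust_region_cauchy_decrease_general g B R hR p hmin
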